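/- arXiv:2505.18751 — 2 statements merged into one kernel-verified Lean document; each statement's English description precedes it below -/
import Mathlib

section
/- For a positive semidefinite Hermitian operator H on a finite-dimensional complex Hilbert space, the von Neumann entropy of the Gibbs state ρ_β = exp(-βH)/Tr(exp(-βH)) converges, as β → ∞, to the logarithm of the dimension of the kernel of H (assuming ker H is nonzero). -/
open Filter Matrix
open scoped ComplexOrder

/-!
With `Z(β) = ∑ᵢ exp(-β λᵢ)`, the entropy of the Gibbs weights is
`(∑ᵢ β λᵢ exp(-β λᵢ)) / Z(β) + log Z(β)`.
As `β → ∞`, `exp(-β λᵢ) → 0` and `β λᵢ exp(-β λᵢ) → 0` for every `λᵢ > 0`, so `Z(β)` tends to the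
number of zero eigenvalues, which is `dim ker H` by rank–nullity, while the first term vanishes.
-/

theorem Matrix.IsHermitian.finrank_ker_mulVecLin {𝕜 ι : Type*} [RCLike 𝕜] [Fintype ι]
    [DecidableEq ι] {A : Matrix ι ι 𝕜} (hA : A.IsHermitian) :
    Module.finrank 𝕜 (LinearMap.ker A.mulVecLin) = Fintype.card {i // hA.eigenvalues i = 0} := by
  have hrank : A.rank = Fintype.card {i // ¬hA.eigenvalues i = 0} :=
    hA.rank_eq_card_non_zero_eigs
  have hsplit := Fintype.card_subtype_compl (fun i => hA.eigenvalues i = 0)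
  have hle := Fintype.card_subtype_le (fun i => hA.eigenvalues i = 0)
  have hnullity := A.mulVecLin.finrank_range_add_finrank_ker
  rw [Module.finrank_fintype_fun_eq_card] at hnullity
  change A.rank + _ = _ at hnullity
  omega

namespace Real

theorem tendsto_exp_neg_mul_atTop {c : ℝ} (hc : 0 ≤ c) :
    Tendsto (fun β => exp (-β * c)) atTop (nhds (if c = 0 then 1 else 0)) := by
  rcases hc.eq_or_lt with rfl | hc
  · simp
  · rw [if_neg hc.ne']
    exact tendsto_exp_atBot.comp <| by
      simpa using tendsto_id.atTop_mul_const hc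

theorem tendsto_mul_mul_exp_neg_mul_atTop {c : ℝ} (hc : 0 ≤ c) :
    Tendsto (fun β => β * c * exp (-β * c)) atTop (nhds 0) := by
  rcases hc.eq_or_lt with rfl | hc
  · simp
  · have := (tendsto_pow_mul_exp_neg_atTop_nhds_zero 1).comp (tendsto_id.atTop_mul_const hc)
    simpa [Function.comp_def, neg_mul] using this

end Real

section Gibbs

variable {ι : Type*} [Fintype ι] (E : ι → ℝ)

noncomputable def partitionFunction (β : ℝ) : ℝ := ∑ i, Real.exp (-β * E i)

theorem partitionFunction_pos [Nonempty ι] (β : ℝ) : 0 < partitionFunction E β :=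
  Finset.sum_pos (fun _ _ => Real.exp_pos _) Finset.univ_nonempty

theorem gibbs_entropy_eq [Nonempty ι] (β : ℝ) :
    -∑ i, Real.exp (-β * E i) / partitionFunction E β *
        Real.log (Real.exp (-β * E i) / partitionFunction E β) =
      (∑ i, β * E i * Real.exp (-β * E i)) / partitionFunction E β +
        Real.log (partitionFunction E β) := by
  have hZ := (partitionFunction_pos E β).ne'
  have hterm : ∀ i, -(Real.exp (-β * E i) / partitionFunction E β *
      (-β * E i - Real.log (partitionFunction E β))) = β * E i * Real.exp (-β * E i) /
        partitionFunction E β + Real.exp (-β * E i) / partitionFunction E β *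
          Real.log (partitionFunction E β) := fun i => by ring
  simp only [Real.log_div (Real.exp_ne_zero _) hZ, Real.log_exp, ← Finset.sum_neg_distrib, hterm,
    Finset.sum_add_distrib, ← Finset.sum_div, ← Finset.sum_mul]
  rw [show ∑ i, Real.exp (-β * E i) = partitionFunction E β from rfl, div_self hZ, one_mul]

variable {E}

theorem tendsto_partitionFunction_atTop (hE : ∀ i, 0 ≤ E i) :
    Tendsto (partitionFunction E) atTop (nhds (Fintype.card {i // E i = 0})) := by
  rw [Fintype.card_subtype, Finset.natCast_card_filter]
  exact tendsto_finsetSum _ fun i _ => Real.tendsto_exp_neg_mul_atTop (hE i)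

theorem tendsto_gibbs_entropy_atTop (hE : ∀ i, 0 ≤ E i) (hE₀ : ∃ i, E i = 0) :
    Tendsto (fun β => -∑ i, Real.exp (-β * E i) / partitionFunction E β *
        Real.log (Real.exp (-β * E i) / partitionFunction E β))
      atTop (nhds (Real.log (Fintype.card {i // E i = 0}))) := by
  obtain ⟨i₀, hi₀⟩ := hE₀
  have : Nonempty ι := ⟨i₀⟩
  have : Nonempty {i // E i = 0} := ⟨⟨i₀, hi₀⟩⟩
  have hcard : (Fintype.card {i // E i = 0} : ℝ) ≠ 0 := Nat.cast_ne_zero.mpr Fintype.card_ne_zero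
  have hZ := tendsto_partitionFunction_atTop hE
  have hN : Tendsto (fun β => ∑ i, β * E i * Real.exp (-β * E i)) atTop (nhds 0) := by
    simpa using
      tendsto_finsetSum Finset.univ fun i _ => Real.tendsto_mul_mul_exp_neg_mul_atTop (hE i)
  simp_rw [gibbs_entropy_eq]
  simpa using (hN.div hZ hcard).add ((Real.continuousAt_log hcard).tendsto.comp hZ)

end Gibbs

/-- For a positive semidefinite Hermitian operator `H` on a finite-dimensional complex Hilbert
space with nonzero kernel, the von Neumann entropy `S(ρ_β) = -Tr(ρ_β log ρ_β)` of the Gibbs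
state `ρ_β = exp(-βH) / Tr(exp(-βH))` — computed via its eigenvalues `exp(-β λ_i) / Z(β)`,
where `λ_i` are the eigenvalues of `H`, with the convention `0 log 0 = 0` — converges as
`β → ∞` to the logarithm of the dimension of `ker H`. -/
theorem stmt1 {n : ℕ} (H : Matrix (Fin n) (Fin n) ℂ) (hH : H.PosSemidef)
    (hker : LinearMap.ker H.mulVecLin ≠ ⊥) :
    Tendsto (fun β : ℝ =>
        -∑ i : Fin n,
          (Real.exp (-β * hH.1.eigenvalues i) / ∑ j : Fin n, Real.exp (-β * hH.1.eigenvalues j)) *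
            Real.log
              (Real.exp (-β * hH.1.eigenvalues i) /
                ∑ j : Fin n, Real.exp (-β * hH.1.eigenvalues j)))
      atTop
      (nhds (Real.log (Module.finrank ℂ (LinearMap.ker H.mulVecLin)))) := by
  have hdim := hH.1.finrank_ker_mulVecLin
  have hzero : ∃ i, hH.1.eigenvalues i = 0 := by
    have hpos : 0 < Module.finrank ℂ (LinearMap.ker H.mulVecLin) :=
      Nat.pos_of_ne_zero fun h => hker (Submodule.finrank_eq_zero.mp h)
    obtain ⟨⟨i, hi⟩⟩ := Fintype.card_pos_iff.mp (hdim ▸ hpos)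
    exact ⟨i, hi⟩
  rw [hdim]
  exact tendsto_gibbs_entropy_atTop hH.eigenvalues_nonneg hzero
end

section
/- Let V be a finite-dimensional complex vector space and P an endomorphism of V ⊗ V. For N ≥ 2, let P_{i,i+1} denote P acting on the i-th and (i+1)-th tensor factors of V^{⊗N} (indices taken cyclically mod N). Suppose all the P_{i,i+1} pairwise commute. Then the trace of the cyclic product P_{1,2}P_{2,3}⋯P_{N-1,N}P_{N,1} equals Tr(A^N), where A is the endomorphism of V ⊗ V with matrix entries A^{(i,i')}_{(j,j')} = P^{(i,j')}_{(i',j)} in terms of the matrix entries of P with respect to a fixed basis of V. -/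
/-!
Expand both traces as sums over closed paths. For the cyclic product, a path is a sequence
`z 0, …, z (N-1)` of basis vectors of `V^{⊗N}`, and `P_{i,i+1}` changes only sites `i` and
`i+1`. Hence on a path of nonzero weight site `j` takes one value `(p j).1` at step `j` and a
single value `(p j).2` at all other steps. Reading off the entry of `P_{i,i+1}` along such a
path gives exactly `A^{p i}_{p (i+1)}`, so the sum becomes the closed-path expansion of
`Tr (A^N)`.
-/

open Matrix

/-- The operator on `V^{⊗N}` (with `V = ℂ^n`, basis indexed by `Fin n`, and tensor-power basis
indexed by `Fin N → Fin n`) acting as `P` on the cyclically adjacent tensor factors `i, i+1`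
(indices mod `N`) and as the identity on all other factors. -/
def cycOp {n N : ℕ} [NeZero N] (P : Matrix (Fin n × Fin n) (Fin n × Fin n) ℂ) (i : Fin N) :
    Matrix (Fin N → Fin n) (Fin N → Fin n) ℂ :=
  Matrix.of fun x y =>
    P (x i, x (i + 1)) (y i, y (i + 1)) *
      ∏ j ∈ Finset.univ.filter fun j : Fin N => j ≠ i ∧ j ≠ i + 1,
        if x j = y j then (1 : ℂ) else 0

/-- The matrix `A` obtained from `P` by swapping the first upper and first lower index:
`A^{(i,i')}_{(j,j')} = P^{(i,j')}_{(i',j)}`. -/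
def swapIdx {n : ℕ} (P : Matrix (Fin n × Fin n) (Fin n × Fin n) ℂ) :
    Matrix (Fin n × Fin n) (Fin n × Fin n) ℂ :=
  Matrix.of fun p q => P (p.1, q.2) (p.2, q.1)

section PathSum

variable {R ι : Type*} [CommSemiring R] [Fintype ι] [DecidableEq ι]

theorem Matrix.list_ofFn_prod_apply {m : ℕ} (M : Fin (m + 1) → Matrix ι ι R) (x y : ι) :
    (List.ofFn M).prod x y =
      ∑ w : Fin m → ι, ∏ i, M i ((Fin.cons x w : Fin (m + 1) → ι) i)
        ((Fin.snoc w y : Fin (m + 1) → ι) i) := by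
  induction m generalizing x with
  | zero => simp [Fin.snoc]
  | succ m ih =>
    rw [List.ofFn_succ, List.prod_cons, mul_apply, ← (Fin.consEquiv fun _ => ι).sum_comp,
      Fintype.sum_prod_type]
    simp only [ih, Finset.mul_sum]
    refine Finset.sum_congr rfl fun k _ => Finset.sum_congr rfl fun w _ => ?_
    rw [show (Fin.consEquiv fun _ => ι) (k, w) = Fin.cons k w from rfl,
      ← Fin.cons_snoc_eq_snoc_cons, Fin.prod_univ_succ (fun i => M i _ _)]
    simp only [Fin.cons_zero, Fin.cons_succ]

theorem Matrix.trace_list_ofFn_prod {N : ℕ} [NeZero N] (M : Fin N → Matrix ι ι R) :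
    trace (List.ofFn M).prod = ∑ z : Fin N → ι, ∏ i, M i (z i) (z (i + 1)) := by
  obtain ⟨m, rfl⟩ := Nat.exists_eq_succ_of_ne_zero (NeZero.ne N)
  rw [trace, ← (Fin.consEquiv fun _ => ι).sum_comp, Fintype.sum_prod_type]
  simp only [diag_apply, list_ofFn_prod_apply, Fin.consEquiv_apply, Fin.snoc_eq_cons_rotate,
    finRotate_apply]

end PathSum

namespace Fin

open Fin.CommRing

variable {N : ℕ} [NeZero N]

theorem add_natCast_ne_self {k : ℕ} (hk₀ : 0 < k) (hkN : k < N) (i : Fin N) :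
    i + (k : Fin N) ≠ i := by
  intro h
  have : N ∣ k := by simpa using congrArg (· - i) h
  exact absurd (Nat.le_of_dvd hk₀ this) (by omega)

theorem add_one_ne_self (hN : 2 ≤ N) (i : Fin N) : i + 1 ≠ i := by
  simpa using add_natCast_ne_self (k := 1) Nat.one_pos hN i

theorem apply_eq_apply_add_one_of_forall {α : Type*} {f : Fin N → α} {j : Fin N}
    (hf : ∀ i, i ≠ j → i + 1 ≠ j → f i = f (i + 1)) {i : Fin N} (hi : i ≠ j) :
    f i = f (j + 1) := by
  have walk : ∀ k : ℕ, k + 1 < N → f (j + (k + 1 : ℕ)) = f (j + 1) := by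
    intro k
    induction k with
    | zero => simp
    | succ k ih =>
      intro hk
      have hstep := hf _ (add_natCast_ne_self k.succ_pos (by omega) j)
        (by simpa [add_assoc, one_add_one_eq_two] using
          add_natCast_ne_self (k := k + 2) (by omega) hk j)
      rw [← ih (by omega), hstep]
      push_cast
      ring_nf
  set k := (i - (j + 1)).val with hk
  have hik : j + (k + 1 : ℕ) = i := by
    push_cast [hk, Fin.cast_val_eq_self]
    ring
  have hkN : k + 1 < N := by
    refine lt_of_le_of_ne (by omega) fun h => hi ?_
    rw [← hik, h, natCast_self, add_zero]
  rw [← hik, walk k hkN]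

end Fin

/-- `cycPath p i j` is the value of site `j` at step `i` of the path encoded by `p`. -/
def cycPath {α : Type*} {N : ℕ} (p : Fin N → α × α) : Fin N → Fin N → α :=
  fun i j => if i = j then (p j).1 else (p j).2

section CycPath

variable {α : Type*} {N : ℕ} [NeZero N]

theorem cycPath_injective (hN : 2 ≤ N) :
    Function.Injective (cycPath : (Fin N → α × α) → Fin N → Fin N → α) := by
  intro p q h
  funext j
  have h₁ := congrFun (congrFun h j) j
  have h₂ := congrFun (congrFun h (j + 1)) j
  simp only [cycPath, if_neg (Fin.add_one_ne_self hN j)] at h₁ h₂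
  exact Prod.ext h₁ h₂

theorem mem_range_cycPath {z : Fin N → Fin N → α}
    (hz : ∀ i j, j ≠ i → j ≠ i + 1 → z i j = z (i + 1) j) : z ∈ Set.range cycPath := by
  refine ⟨fun j => (z j j, z (j + 1) j), funext fun i => funext fun j => ?_⟩
  by_cases h : i = j
  · simp [cycPath, h]
  · simp only [cycPath, if_neg h]
    exact (Fin.apply_eq_apply_add_one_of_forall
      (fun i h₁ h₂ => hz i j (Ne.symm h₁) (Ne.symm h₂)) h).symm

end CycPath

section CycOp

variable {n N : ℕ} [NeZero N] (P : Matrix (Fin n × Fin n) (Fin n × Fin n) ℂ)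

theorem cycOp_apply_eq_zero {i j : Fin N} {x y : Fin N → Fin n} (hj : j ≠ i) (hj' : j ≠ i + 1)
    (hxy : x j ≠ y j) : cycOp P i x y = 0 :=
  mul_eq_zero_of_right _ (Finset.prod_eq_zero (i := j) (by simp [hj, hj']) (if_neg hxy))

theorem cycOp_apply_of_forall {i : Fin N} {x y : Fin N → Fin n}
    (hxy : ∀ j, j ≠ i → j ≠ i + 1 → x j = y j) :
    cycOp P i x y = P (x i, x (i + 1)) (y i, y (i + 1)) := by
  rw [cycOp, of_apply, Finset.prod_eq_one, mul_one]
  intro j hj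
  rw [Finset.mem_filter] at hj
  exact if_pos (hxy j hj.2.1 hj.2.2)

theorem cycOp_cycPath (hN : 2 ≤ N) (p : Fin N → Fin n × Fin n) (i : Fin N) :
    cycOp P i (cycPath p i) (cycPath p (i + 1)) = swapIdx P (p i) (p (i + 1)) := by
  have hi := Fin.add_one_ne_self hN i
  rw [cycOp_apply_of_forall P fun j h₁ h₂ => by simp [cycPath, Ne.symm h₁, Ne.symm h₂]]
  simp [cycPath, swapIdx, hi, Ne.symm hi]

theorem sum_prod_cycOp (hN : 2 ≤ N) :
    ∑ z : Fin N → Fin N → Fin n, ∏ i, cycOp P i (z i) (z (i + 1)) =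
      ∑ p : Fin N → Fin n × Fin n, ∏ i, swapIdx P (p i) (p (i + 1)) := by
  symm
  refine Finset.sum_of_injOn cycPath (cycPath_injective hN).injOn (fun _ _ => Finset.mem_univ _)
    (fun z _ hz => ?_) fun p _ => Finset.prod_congr rfl fun i _ => (cycOp_cycPath P hN p i).symm
  rw [Finset.coe_univ, Set.image_univ] at hz
  by_contra hne
  refine hz (mem_range_cycPath fun i j h₁ h₂ => ?_)
  by_contra hz'
  exact hne (Finset.prod_eq_zero (Finset.mem_univ i) (cycOp_apply_eq_zero P h₁ h₂ hz'))

end CycOp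

theorem stmt5_general {n N : ℕ} [NeZero N] (hN : 2 ≤ N) (P : Matrix (Fin n × Fin n) (Fin n × Fin n) ℂ) :
    Matrix.trace (List.ofFn fun i : Fin N => cycOp P i).prod =
      Matrix.trace (swapIdx P ^ N) := by
  rw [trace_list_ofFn_prod, ← List.prod_replicate, ← List.ofFn_const, trace_list_ofFn_prod]
  exact sum_prod_cycOp P hN

/-- If the cyclic local operators `P_{i,i+1}` on `V^{⊗N}` pairwise commute, the trace of the
cyclic product `P_{1,2} P_{2,3} ⋯ P_{N-1,N} P_{N,1}` equals `Tr (A^N)` where `A` is obtained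
from `P` by permuting tensor indices. -/
theorem stmt5 {n N : ℕ} [NeZero N] (hN : 2 ≤ N) (P : Matrix (Fin n × Fin n) (Fin n × Fin n) ℂ)
    (hcomm : ∀ i j : Fin N, cycOp P i * cycOp P j = cycOp P j * cycOp P i) :
    Matrix.trace (List.ofFn fun i : Fin N => cycOp P i).prod =
      Matrix.trace (swapIdx P ^ N) :=
  stmt5_general hN P
end
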